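/- arXiv:1309.5144 — 3 statements merged into one kernel-verified Lean document; each statement's English description precedes it below -/
import Mathlib

section
/- The safety predicate is admissible (preserves lubs of ascending chains): for any annotated type θ and ascending chain u : ℕ → ⟦θ*⟧_{⊥⋆}, if safe θ (uᵢ) for all i, then safe θ (⨆ᵢ uᵢ). -/
/-- Lifted domain `C_{⊥⋆}`: adds a bottom element `⊥` (divergence, `none`)
and an error element `⋆` (`some (Sum.inr ())`), with `⋆` above only `⊥`. -/
abbrev LS (C : Type) : Type := WithBot (C ⊕ Unit)

/-- Simple types. -/
inductive Ty : Type
  | bool : Ty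
  | arrow : Ty → Ty → Ty

/-- Semantic domains: `⟦bool⟧ = Bool`, `⟦t₁→t₂⟧ = Set Privileges → ⟦t₁⟧ → ⟦t₂⟧_{⊥⋆}`. -/
def Den (Privileges : Type) : Ty → Type
  | Ty.bool => Bool
  | Ty.arrow t1 t2 => Set Privileges → Den Privileges t1 → LS (Den Privileges t2)

/-- The cpo order: `Bool` discrete (via its partial order), functions ordered pointwise. -/
noncomputable def denOrder (Privileges : Type) : (t : Ty) → PartialOrder (Den Privileges t)
  | Ty.bool => inferInstanceAs (PartialOrder Bool)
  | Ty.arrow t1 t2 =>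
      letI := denOrder Privileges t2
      inferInstanceAs (PartialOrder (Set Privileges → Den Privileges t1 → LS (Den Privileges t2)))

noncomputable instance (Privileges : Type) (t : Ty) : PartialOrder (Den Privileges t) :=
  denOrder Privileges t

/-- Annotated types: `θ ::= bool | θ₁ →^Π θ₂`. -/
inductive ATy (Privileges : Type) : Type
  | bool : ATy Privileges
  | arrow : ATy Privileges → Set Privileges → ATy Privileges → ATy Privileges

/-- Erasure of annotations. -/
def ATy.erase {Privileges : Type} : ATy Privileges → Ty
  | ATy.bool => Ty.bool
  | ATy.arrow t1 _ t2 => Ty.arrow t1.erase t2.erase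

/-- The safety predicate. -/
def safe {Privileges : Type} : (θ : ATy Privileges) → LS (Den Privileges θ.erase) → Prop
  | _, none => True
  | _, some (Sum.inr _) => False
  | ATy.bool, some (Sum.inl _) => True
  | ATy.arrow θ1 Pi θ2, some (Sum.inl f) =>
      ∀ (P : Set Privileges), Pi ⊆ P → ∀ d : Den Privileges θ1.erase,
        safe θ1 (some (Sum.inl d)) → safe θ2 (f P d)

/-!
In `C_{⊥⋆}` the lub of a set not containing `⋆` is not `⋆`, and the lub `f` of a set of
functions is computed pointwise: `f P d` is the lub of the values `g P d`. So, by induction on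
`θ`, safety of every `g P d` at `θ₂` passes to `f P d`.
-/

namespace WithBot

variable {α β : Type*} [Preorder α] [Preorder β]

lemma exists_inr_mem_of_isLUB_inr {S : Set (WithBot (α ⊕ β))} {b : β}
    (h : IsLUB S (some (Sum.inr b))) : ∃ b', some (Sum.inr b') ∈ S := by
  by_contra! hS
  have hbot : (⊥ : WithBot (α ⊕ β)) ∈ upperBounds S := by
    intro x hx
    match x, h.1 hx with
    | none, _ => exact le_rfl
    | some (Sum.inl _), hle => exact absurd (WithBot.coe_le_coe.1 hle) Sum.not_inl_le_inr
    | some (Sum.inr b'), _ => exact absurd hx (hS b')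
  exact WithBot.not_coe_le_bot _ (h.2 hbot)

lemma isLUB_inl_preimage {S : Set (WithBot (α ⊕ β))} {a : α}
    (h : IsLUB S (some (Sum.inl a))) : IsLUB {a' | some (Sum.inl a') ∈ S} a := by
  refine ⟨fun a' ha' => Sum.inl_le_inl_iff.1 (WithBot.coe_le_coe.1 (h.1 ha')), fun w hw => ?_⟩
  have hub : (some (Sum.inl w) : WithBot (α ⊕ β)) ∈ upperBounds S := by
    intro x hx
    match x, h.1 hx with
    | none, _ => exact bot_le
    | some (Sum.inl a'), _ => exact WithBot.coe_le_coe.2 (Sum.inl_le_inl_iff.2 (hw hx))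
    | some (Sum.inr _), hle => exact absurd (WithBot.coe_le_coe.1 hle) Sum.not_inr_le_inl
  exact Sum.inl_le_inl_iff.1 (WithBot.coe_le_coe.1 (h.2 hub))

end WithBot

lemma safe_of_isLUB {Privileges : Type} (θ : ATy Privileges) {S : Set (LS (Den Privileges θ.erase))}
    {v : LS (Den Privileges θ.erase)} (hv : IsLUB S v) (hS : ∀ x ∈ S, safe θ x) : safe θ v := by
  induction θ with
  | bool =>
    match v, hv with
    | none, _ => trivial
    | some (Sum.inl _), _ => trivial
    | some (Sum.inr _), hv =>
      obtain ⟨_, herr⟩ := WithBot.exists_inr_mem_of_isLUB_inr hv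
      exact hS _ herr
  | arrow θ1 Pi θ2 _ ih2 =>
    match v, hv with
    | none, _ => trivial
    | some (Sum.inr _), hv =>
      obtain ⟨_, herr⟩ := WithBot.exists_inr_mem_of_isLUB_inr hv
      exact hS _ herr
    | some (Sum.inl f), hv =>
      intro P hP d hd
      have hfPd := isLUB_pi.1 (isLUB_pi.1 (WithBot.isLUB_inl_preimage hv) P) d
      refine ih2 hfPd ?_
      rintro _ ⟨_, ⟨g, hg, rfl⟩, rfl⟩
      exact hS _ hg P hP d hd

theorem safe_admissible_general {Privileges : Type} (θ : ATy Privileges)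
    (u : ℕ → LS (Den Privileges θ.erase))
    (v : LS (Den Privileges θ.erase)) (hv : IsLUB (Set.range u) v)
    (h : ∀ i, safe θ (u i)) : safe θ v :=
  safe_of_isLUB θ hv (Set.forall_mem_range.2 h)

/-- `safe` is admissible: it is preserved by least upper bounds of ascending chains. -/
theorem safe_admissible {Privileges : Type} (θ : ATy Privileges)
    (u : ℕ → LS (Den Privileges θ.erase)) (hu : Monotone u)
    (v : LS (Den Privileges θ.erase)) (hv : IsLUB (Set.range u) v)
    (h : ∀ i, safe θ (u i)) : safe θ v :=
  safe_admissible_general θ u v hv h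
end

section
/- The simulation relation preserves lubs: for any simple type t, if u : ℕ → ⟦t⟧ and u' : ℕ → ⟦t⟧ˢ are ascending chains with sim t uᵢ u'ᵢ for all i, then sim t (⨆ᵢ uᵢ) (⨆ᵢ u'ᵢ). -/
/-- Nonempty stacks of frames (principal, enabled privileges). -/
def Stacks (Principals Privileges : Type) : Type :=
  {l : List (Principals × Set Privileges) // l ≠ []}

/-- Stack semantic domains. -/
def DenS (Principals Privileges : Type) : Ty → Type
  | Ty.bool => Bool
  | Ty.arrow t1 t2 =>
      Stacks Principals Privileges → DenS Principals Privileges t1 →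
        LS (DenS Principals Privileges t2)

noncomputable def denSOrder (Principals Privileges : Type) :
    (t : Ty) → PartialOrder (DenS Principals Privileges t)
  | Ty.bool => inferInstanceAs (PartialOrder Bool)
  | Ty.arrow t1 t2 =>
      letI := denSOrder Principals Privileges t2
      inferInstanceAs (PartialOrder (Stacks Principals Privileges →
        DenS Principals Privileges t1 → LS (DenS Principals Privileges t2)))

noncomputable instance (Principals Privileges : Type) (t : Ty) :
    PartialOrder (DenS Principals Privileges t) :=
  denSOrder Principals Privileges t

/-- Stack inspection predicate. -/
def check {Principals Privileges : Type} (A : Principals → Set Privileges)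
    (p : Privileges) : List (Principals × Set Privileges) → Prop
  | [] => False
  | ⟨n, P⟩ :: S => p ∈ A n ∧ (p ∈ P ∨ check A p S)

/-- Enabled, authorized privileges of a stack. -/
def privs {Principals Privileges : Type} (A : Principals → Set Privileges)
    (S : Stacks Principals Privileges) : Set Privileges :=
  {p | check A p S.val}

/-- The simulation relation between the eager and the stack semantics. -/
def sim {Principals Privileges : Type} (A : Principals → Set Privileges) :
    (t : Ty) → LS (Den Privileges t) → LS (DenS Principals Privileges t) → Prop
  | _, none, none => True
  | _, none, some _ => False
  | _, some _, none => False
  | _, some (Sum.inr _), some (Sum.inr _) => True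
  | _, some (Sum.inr _), some (Sum.inl _) => False
  | _, some (Sum.inl _), some (Sum.inr _) => False
  | Ty.bool, some (Sum.inl b), some (Sum.inl b') => b = b'
  | Ty.arrow t1 t2, some (Sum.inl f), some (Sum.inl f') =>
      ∀ (S : Stacks Principals Privileges) (d : Den Privileges t1)
        (d' : DenS Principals Privileges t1),
        sim A t1 (some (Sum.inl d)) (some (Sum.inl d')) →
        sim A t2 (f (privs A S) d) (f' S d')

/-! A family in `C_{⊥⋆}` with lub `⊥` is constantly `⊥`; otherwise it has a member of the same
shape (`⋆` or proper) as its lub, and a proper lub is the lub in `C` of the proper members.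
Since `sim` only relates elements of the same shape, the two lubs have the same shape. At `bool`,
`sim` is equality, so the two families and hence their lubs coincide. At an arrow type, lubs of
functions are computed pointwise: applying the two families to `sim`-related arguments (through
`LS.bind`, strict in `⊥` and `⋆`) gives `sim`-related families at the result type, whose lubs are
the applied lubs, and induction on the type concludes. -/

open Set Sum

namespace LS

variable {C E ι : Type}

def bind : LS C → (C → LS E) → LS E
  | none, _ => none
  | some (inl c), φ => φ c
  | some (inr u), _ => some (inr u)

def shape (x : LS C) : LS Unit :=
  bind x fun _ => some (inl ())

attribute [local simp] WithBot.some_eq_coe WithBot.none_eq_bot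

variable [PartialOrder C]

theorem shape_mono : Monotone (shape (C := C)) := by
  rintro (_ | (a | ⟨⟩)) (_ | (b | ⟨⟩)) h <;> simp_all [shape, bind]

theorem shape_eq_of_le {x y : LS C} (hx : x ≠ none) (h : x ≤ y) : shape x = shape y := by
  rcases x with _ | (a | ⟨⟩) <;> rcases y with _ | (b | ⟨⟩) <;> simp_all [shape, bind]

theorem isLUB_range_shape {u : ι → LS C} {v : LS C} (hu : IsLUB (range u) v) :
    IsLUB (range fun i => shape (u i)) (shape v) := by
  refine ⟨?_, fun b hb => ?_⟩
  · rintro _ ⟨i, rfl⟩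
    exact shape_mono (hu.1 (mem_range_self i))
  by_cases hv : v = none
  · subst hv; exact bot_le
  obtain ⟨i, hi⟩ : ∃ i, u i ≠ none := by
    by_contra! hu'
    exact hv (le_bot_iff.mp (hu.2 (by rintro _ ⟨i, rfl⟩; exact (hu' i).le)))
  rw [← shape_eq_of_le hi (hu.1 (mem_range_self i))]
  exact hb (mem_range_self i)

theorem isLUB_inl_preimage {s : Set (LS C)} {w : C} (hs : IsLUB s (some (inl w))) :
    IsLUB {c | some (inl c) ∈ s} w := by
  refine ⟨fun c hc => by simpa using hs.1 hc, fun b hb => ?_⟩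
  have : some (inl b) ∈ upperBounds s := by
    rintro (_ | (a | ⟨⟩)) ha
    · exact bot_le
    · simpa using hb ha
    · simpa using hs.1 ha
  simpa using hs.2 this

variable [PartialOrder E]

theorem isLUB_range_bind {u : ι → LS C} {w : C} {φ : C → LS E}
    (hu : IsLUB (range u) (some (inl w))) (hφ : IsLUB (φ '' {c | some (inl c) ∈ range u}) (φ w)) :
    IsLUB (range fun i => bind (u i) φ) (φ w) := by
  refine ⟨?_, fun b hb => hφ.2 ?_⟩
  · rintro _ ⟨i, rfl⟩
    dsimp only
    rcases hi : u i with _ | (a | ⟨⟩)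
    · exact bot_le
    · exact hφ.1 (mem_image_of_mem φ ⟨i, hi⟩)
    · simpa [hi] using hu.1 (mem_range_self i)
  · rintro _ ⟨c, ⟨i, hi⟩, rfl⟩
    simpa [hi, bind] using hb (mem_range_self i)

theorem isLUB_range_bind_apply₂ {α β : Type} {u : ι → LS (α → β → LS E)} {f : α → β → LS E}
    (hu : IsLUB (range u) (some (inl f))) (a : α) (b : β) :
    IsLUB (range fun i => bind (u i) fun g => g a b) (f a b) := by
  refine isLUB_range_bind hu ?_
  simpa only [image_image] using isLUB_pi.1 (isLUB_pi.1 (isLUB_inl_preimage hu) a) b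

end LS

section Simulation

variable {Principals Privileges : Type} {A : Principals → Set Privileges}

theorem sim_bool_iff {d : LS (Den Privileges .bool)}
    {d' : LS (DenS Principals Privileges .bool)} : sim A .bool d d' ↔ d = d' := by
  constructor
  · rcases d with _ | (b | ⟨⟩) <;> rcases d' with _ | (b' | ⟨⟩) <;> rintro ⟨⟩ <;> rfl
  · rintro rfl
    rcases d with _ | (b | ⟨⟩) <;> trivial

theorem sim.shape_eq {t : Ty} {d : LS (Den Privileges t)} {d' : LS (DenS Principals Privileges t)}
    (h : sim A t d d') : d.shape = d'.shape := by
  rcases d with _ | (a | ⟨⟩) <;> rcases d' with _ | (a' | ⟨⟩) <;>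
    first | rfl | cases t <;> exact h.elim

theorem sim.bind_apply {t₁ t₂ : Ty} {f : LS (Den Privileges (.arrow t₁ t₂))}
    {f' : LS (DenS Principals Privileges (.arrow t₁ t₂))} (h : sim A (.arrow t₁ t₂) f f')
    (S : Stacks Principals Privileges) {d : Den Privileges t₁} {d' : DenS Principals Privileges t₁}
    (hd : sim A t₁ (some (inl d)) (some (inl d'))) :
    sim A t₂ (f.bind fun g => g (privs A S) d) (f'.bind fun g => g S d') := by
  rcases f with _ | (g | ⟨⟩) <;> rcases f' with _ | (g' | ⟨⟩)
  all_goals first | exact h.elim | exact h S d d' hd | cases t₂ <;> trivial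

end Simulation

theorem sim_of_isLUB {Principals Privileges ι : Type} (A : Principals → Set Privileges) :
    ∀ (t : Ty) {u : ι → LS (Den Privileges t)} {u' : ι → LS (DenS Principals Privileges t)}
      {v : LS (Den Privileges t)} {v' : LS (DenS Principals Privileges t)},
      IsLUB (range u) v → IsLUB (range u') v' → (∀ i, sim A t (u i) (u' i)) → sim A t v v'
  | .bool, u, u', v, v', hv, hv', h => by
    have huu : u = u' := funext fun i => sim_bool_iff.1 (h i)
    exact sim_bool_iff.2 (hv.unique (huu ▸ hv'))
  | .arrow t₁ t₂, u, u', v, v', hv, hv', h => by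
    have hshape : v.shape = v'.shape := by
      have := LS.isLUB_range_shape hv'
      simp only [← fun i => (h i).shape_eq] at this
      exact (LS.isLUB_range_shape hv).unique this
    -- `hshape` rules out the mixed cases; `⊥, ⊥` and `⋆, ⋆` are related outright.
    rcases v with _ | (w | ⟨⟩) <;> rcases v' with _ | (w' | ⟨⟩) <;>
      try first | trivial | cases hshape
    intro S d d' hd
    exact sim_of_isLUB A t₂ (LS.isLUB_range_bind_apply₂ hv (privs A S) d)
      (LS.isLUB_range_bind_apply₂ hv' S d') fun i => (h i).bind_apply S hd

theorem sim_admissible_general {Principals Privileges : Type} (A : Principals → Set Privileges)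
    (t : Ty) (u : ℕ → LS (Den Privileges t))
    (u' : ℕ → LS (DenS Principals Privileges t))
    (v : LS (Den Privileges t)) (v' : LS (DenS Principals Privileges t))
    (hv : IsLUB (Set.range u) v) (hv' : IsLUB (Set.range u') v')
    (h : ∀ i, sim A t (u i) (u' i)) : sim A t v v' :=
  sim_of_isLUB A t hv hv' h

/-- `sim` preserves least upper bounds of ascending chains. -/
theorem sim_admissible {Principals Privileges : Type} (A : Principals → Set Privileges)
    (t : Ty) (u : ℕ → LS (Den Privileges t))
    (u' : ℕ → LS (DenS Principals Privileges t))
    (hu : Monotone u) (hu' : Monotone u')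
    (v : LS (Den Privileges t)) (v' : LS (DenS Principals Privileges t))
    (hv : IsLUB (Set.range u) v) (hv' : IsLUB (Set.range u') v')
    (h : ∀ i, sim A t (u i) (u' i)) : sim A t v v' :=
  sim_admissible_general A t u u' v v' hv hv' h
end

section
/- The relation rel preserves lubs: for any annotated type θ and ascending chains u, u' : ℕ → ⟦θ*⟧_{⊥⋆}, if rel θ uᵢ u'ᵢ for all i, then rel θ (⨆ᵢ uᵢ) (⨆ᵢ u'ᵢ). -/
/-- The logical relation `rel` used for erasure correctness. -/
def rel {Privileges : Type} :
    (θ : ATy Privileges) → LS (Den Privileges θ.erase) → LS (Den Privileges θ.erase) → Prop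
  | _, none, none => True
  | _, none, some _ => False
  | _, some _, none => False
  | _, some (Sum.inr _), _ => False
  | _, _, some (Sum.inr _) => False
  | ATy.bool, some (Sum.inl b), some (Sum.inl b') => b = b'
  | ATy.arrow θ1 Pi θ2, some (Sum.inl f), some (Sum.inl f') =>
      ∀ (P : Set Privileges), Pi ⊆ P →
        ∀ (d d' : Den Privileges θ1.erase),
          rel θ1 (some (Sum.inl d)) (some (Sum.inl d')) → rel θ2 (f P d) (f' P d')

/-! `rel` only relates `⊥` with `⊥` and values with values, so the two chains have the same
support and their lubs are both `⊥` or both values. At `bool`, `rel` is equality away from `⊥`.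
At `θ₁ →^Π θ₂`, lubs of values are computed pointwise, so for fixed `P ⊇ Π` and related `d, d'`
the chains `uᵢ P d`, `u'ᵢ P d'` are related chains with lubs `v P d`, `v' P d'`, and the induction
hypothesis at `θ₂` applies. -/

section LiftedSum

variable {α β : Type*}

def BothBotOrInl (a b : WithBot (α ⊕ β)) : Prop :=
  (a = ⊥ ∧ b = ⊥) ∨ ∃ x y, a = ↑(Sum.inl x : α ⊕ β) ∧ b = ↑(Sum.inl y : α ⊕ β)

variable [Preorder α] [Preorder β]

theorem WithBot.exists_eq_inl_of_inl_le {a : α} {z : WithBot (α ⊕ β)}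
    (h : ↑(Sum.inl a : α ⊕ β) ≤ z) : ∃ b, z = ↑(Sum.inl b : α ⊕ β) ∧ a ≤ b := by
  obtain ⟨b | b, rfl, hle⟩ := WithBot.coe_le_iff.mp h
  · exact ⟨b, rfl, Sum.inl_le_inl_iff.mp hle⟩
  · exact (Sum.not_inl_le_inr hle).elim

theorem WithBot.eq_bot_or_exists_inl_of_le_inl {a : α} {z : WithBot (α ⊕ β)}
    (h : z ≤ ↑(Sum.inl a : α ⊕ β)) : z = ⊥ ∨ ∃ b, z = ↑(Sum.inl b : α ⊕ β) ∧ b ≤ a := by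
  rcases z with _ | b | b
  · exact Or.inl rfl
  · exact Or.inr ⟨b, rfl, Sum.inl_le_inl_iff.mp (WithBot.coe_le_coe.mp h)⟩
  · exact (Sum.not_inr_le_inl (WithBot.coe_le_coe.mp h)).elim

theorem BothBotOrInl.of_isLUB {ι : Type*} {u u' : ι → WithBot (α ⊕ β)} {v v' : WithBot (α ⊕ β)}
    (h : ∀ i, BothBotOrInl (u i) (u' i)) (hv : IsLUB (Set.range u) v)
    (hv' : IsLUB (Set.range u') v') : BothBotOrInl v v' := by
  by_cases hbot : ∀ i, u i = ⊥
  · have hbot' : ∀ i, u' i = ⊥ := fun i => by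
      rcases h i with ⟨-, h'⟩ | ⟨x, -, hx, -⟩
      · exact h'
      · simp [hbot i] at hx
    refine Or.inl ⟨WithBot.le_bot_iff.mp (hv.2 ?_), WithBot.le_bot_iff.mp (hv'.2 ?_)⟩
    · rintro _ ⟨i, rfl⟩; exact (hbot i).le
    · rintro _ ⟨i, rfl⟩; exact (hbot' i).le
  · push Not at hbot
    obtain ⟨i, hi⟩ := hbot
    rcases h i with ⟨hb, -⟩ | ⟨x, y, hx, hy⟩
    · exact (hi hb).elim
    obtain ⟨F, rfl, -⟩ := WithBot.exists_eq_inl_of_inl_le (hx ▸ hv.1 ⟨i, rfl⟩)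
    obtain ⟨F', rfl, -⟩ := WithBot.exists_eq_inl_of_inl_le (hy ▸ hv'.1 ⟨i, rfl⟩)
    exact Or.inr ⟨F, F', rfl, rfl⟩

end LiftedSum

section Rel

variable {Privileges : Type}

theorem rel_bot_bot (θ : ATy Privileges) : rel θ ⊥ ⊥ := by
  cases θ <;> trivial

theorem bothBotOrInl_of_rel {θ : ATy Privileges} {a b : LS (Den Privileges θ.erase)}
    (h : rel θ a b) : BothBotOrInl a b := by
  cases θ <;> rcases a with _ | x | x <;> rcases b with _ | y | y <;>
    first
      | exact Or.inl ⟨rfl, rfl⟩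
      | exact Or.inr ⟨_, _, rfl, rfl⟩
      | exact h.elim

theorem eq_of_rel_bool {a b : LS (Den Privileges (ATy.bool : ATy Privileges).erase)}
    (h : rel ATy.bool a b) : a = b := by
  rcases bothBotOrInl_of_rel h with ⟨rfl, rfl⟩ | ⟨x, y, rfl, rfl⟩
  · rfl
  · rw [show x = y from h]

end Rel

section LiftApp

variable {Privileges : Type} {t1 t2 : Ty}

-- `⋆` is sent to `⊥` as well, which keeps `liftApp · Q d` monotone on all of `LS`.
def liftApp : LS (Den Privileges (t1.arrow t2)) → Set Privileges → Den Privileges t1 →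
    LS (Den Privileges t2)
  | some (Sum.inl f) => f
  | _ => fun _ _ => ⊥

theorem liftApp_mono (Q : Set Privileges) (d : Den Privileges t1) :
    Monotone fun x : LS (Den Privileges (t1.arrow t2)) => liftApp x Q d := by
  rintro (_ | f | e) y hxy
  · exact bot_le
  · obtain ⟨g, rfl, hfg⟩ := WithBot.exists_eq_inl_of_inl_le hxy
    exact hfg Q d
  · exact bot_le

theorem rel_liftApp {θ1 θ2 : ATy Privileges} {Pi : Set Privileges}
    {x x' : LS (Den Privileges (ATy.arrow θ1 Pi θ2).erase)} {Q : Set Privileges}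
    {d d' : Den Privileges θ1.erase} (h : rel (ATy.arrow θ1 Pi θ2) x x') (hQ : Pi ⊆ Q)
    (hd : rel θ1 ↑(Sum.inl d : _ ⊕ Unit) ↑(Sum.inl d' : _ ⊕ Unit)) :
    rel θ2 (liftApp x Q d) (liftApp x' Q d') := by
  rcases bothBotOrInl_of_rel h with ⟨rfl, rfl⟩ | ⟨f, f', rfl, rfl⟩
  · exact rel_bot_bot θ2
  · exact h Q hQ d d' hd

theorem isLUB_range_liftApp {ι : Type*} {w : ι → LS (Den Privileges (t1.arrow t2))}
    {F : Den Privileges (t1.arrow t2)} (hw : IsLUB (Set.range w) ↑(Sum.inl F : _ ⊕ Unit))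
    (Q : Set Privileges) (d : Den Privileges t1) :
    IsLUB (Set.range fun i => liftApp (w i) Q d) (F Q d) := by
  refine ⟨?_, fun b hb => ?_⟩
  · rintro _ ⟨i, rfl⟩
    exact liftApp_mono Q d (hw.1 ⟨i, rfl⟩)
  classical
  -- the competitor: `F` with its value at `(Q, d)` replaced by `b`
  let G : Den Privileges (t1.arrow t2) := fun Q' d' => if Q' = Q ∧ d' = d then b else F Q' d'
  have hG : ↑(Sum.inl G : _ ⊕ Unit) ∈ upperBounds (Set.range w) := by
    rintro _ ⟨i, rfl⟩
    rcases WithBot.eq_bot_or_exists_inl_of_le_inl (hw.1 ⟨i, rfl⟩) with hi | ⟨g, hi, hgF⟩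
    · exact hi ▸ bot_le
    rw [hi]
    refine WithBot.coe_le_coe.mpr (Sum.inl_le_inl_iff.mpr fun Q' d' => ?_)
    by_cases hQd : Q' = Q ∧ d' = d
    · obtain ⟨rfl, rfl⟩ := hQd
      simp only [G, and_self, if_true]
      have hbi : liftApp (w i) Q' d' ≤ b := hb ⟨i, rfl⟩
      rwa [hi] at hbi
    · simpa only [G, hQd, if_false] using hgF Q' d'
  obtain ⟨G', hG', hFG⟩ := WithBot.exists_eq_inl_of_inl_le (hw.2 hG)
  cases Sum.inl_injective (WithBot.coe_injective hG')
  simpa only [G, and_self, if_true] using hFG Q d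

end LiftApp

/-- `rel` preserves least upper bounds of ascending chains. -/
theorem rel_admissible {Privileges : Type} (θ : ATy Privileges)
    (u u' : ℕ → LS (Den Privileges θ.erase)) (hu : Monotone u) (hu' : Monotone u')
    (v v' : LS (Den Privileges θ.erase))
    (hv : IsLUB (Set.range u) v) (hv' : IsLUB (Set.range u') v')
    (h : ∀ i, rel θ (u i) (u' i)) : rel θ v v' := by
  induction θ with
  | bool =>
    obtain rfl : u = u' := funext fun i => eq_of_rel_bool (h i)
    obtain rfl := hv.unique hv'
    rcases BothBotOrInl.of_isLUB (fun i => bothBotOrInl_of_rel (h i)) hv hv with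
      ⟨rfl, -⟩ | ⟨x, -, rfl, -⟩
    · exact rel_bot_bot _
    · exact rfl
  | arrow θ1 Pi θ2 _ ih =>
    rcases BothBotOrInl.of_isLUB (fun i => bothBotOrInl_of_rel (h i)) hv hv' with
      ⟨rfl, rfl⟩ | ⟨F, F', rfl, rfl⟩
    · exact rel_bot_bot _
    intro Q hQ d d' hd
    refine ih (fun i => liftApp (u i) Q d) (fun i => liftApp (u' i) Q d')
      ((liftApp_mono Q d).comp hu) ((liftApp_mono Q d').comp hu') _ _ ?_ ?_
      fun i => rel_liftApp (h i) hQ hd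
    · exact isLUB_range_liftApp hv Q d
    · exact isLUB_range_liftApp hv' Q d'
end
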